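/- If h and h' are Hessenberg functions with degree tuples β and β' satisfying β_i ≥ β'_i for all i, then J_h ⊆ J_{h'}. -/
import Mathlib


open MvPolynomial

/-- The index set of variables `x_a, x_{a+1}, ..., x_b` (1-indexed) among `x_1, ..., x_n`. -/
def seg (n a b : ℕ) : Finset (Fin n) :=
  Finset.univ.filter fun i => a ≤ (i : ℕ) + 1 ∧ (i : ℕ) + 1 ≤ b

/-- Truncated elementary symmetric polynomial of degree `d` in the variables indexed by `S`. -/
noncomputable def ee (n : ℕ) (d : ℤ) (S : Finset (Fin n)) : MvPolynomial (Fin n) ℤ :=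
  if 0 ≤ d then ∑ A ∈ S.powersetCard d.toNat, ∏ i ∈ A, X i else 0

/-- Truncated complete homogeneous symmetric polynomial of degree `d` in variables indexed by `S`. -/
noncomputable def te (n : ℕ) (d : ℤ) (S : Finset (Fin n)) : MvPolynomial (Fin n) ℤ :=
  if 0 ≤ d then ∑ m ∈ S.sym d.toNat, ((m : Multiset (Fin n)).map X).prod else 0

noncomputable def teN (n : ℕ) (d : ℕ) (S : Finset (Fin n)) : MvPolynomial (Fin n) ℤ :=
  ∑ m ∈ S.sym d, ((m : Multiset (Fin n)).map X).prod

lemma te_natCast (n d : ℕ) (S : Finset (Fin n)) : te n (d : ℤ) S = teN n d S := by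
  simp [te, teN]

lemma teN_empty (n d : ℕ) : teN n (d + 1) (∅ : Finset (Fin n)) = 0 := by
  simp [teN]

lemma mem_seg_iff (n a b : ℕ) (i : Fin n) : i ∈ seg n a b ↔ a ≤ (i : ℕ) + 1 ∧ (i : ℕ) + 1 ≤ b := by
  simp [seg]

lemma teN_rec (n d : ℕ) (S : Finset (Fin n)) (j : Fin n) (hj : j ∈ S) :
    teN n (d + 1) S = teN n (d + 1) (S.erase j) + X j * teN n d S := by
  classical
  have hsplit : S.sym (d + 1) =
      (S.sym (d + 1)).filter (fun m => j ∈ m) ∪ (S.sym (d + 1)).filter (fun m => j ∉ m) := by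
    rw [Finset.filter_union_filter_not_eq]
  have hnotin : (S.sym (d + 1)).filter (fun m => j ∉ m) = (S.erase j).sym (d + 1) := by
    ext m
    simp only [Finset.mem_filter, Finset.mem_sym_iff, Finset.mem_erase]
    constructor
    · rintro ⟨h1, h2⟩ a ha
      exact ⟨fun e => h2 (e ▸ ha), h1 a ha⟩
    · intro h1
      exact ⟨fun a ha => (h1 a ha).2, fun hjm => (h1 j hjm).1 rfl⟩
  have hdisj : Disjoint ((S.sym (d + 1)).filter (fun m => j ∈ m))
      ((S.sym (d + 1)).filter (fun m => j ∉ m)) :=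
    Finset.disjoint_filter_filter_not _ _ _
  have hin : ∑ m ∈ (S.sym (d + 1)).filter (fun m => j ∈ m),
      ((m : Multiset (Fin n)).map X).prod = X j * teN n d S := by
    rw [teN, Finset.mul_sum]
    refine Finset.sum_bij' (fun m hm => Sym.erase m j (Finset.mem_filter.mp hm).2)
      (fun m _ => j ::ₛ m) ?_ ?_ ?_ ?_ ?_
    · intro m hm
      have h1 := (Finset.mem_filter.mp hm).1
      rw [Finset.mem_sym_iff] at h1 ⊢
      intro a ha
      apply h1
      rw [← Sym.mem_coe, Sym.coe_erase] at ha
      rw [← Sym.mem_coe]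
      exact Multiset.mem_of_mem_erase ha
    · intro m hm
      rw [Finset.mem_filter]
      refine ⟨?_, Sym.mem_cons_self _ _⟩
      rw [Finset.mem_sym_iff] at hm ⊢
      intro a ha
      rcases Sym.mem_cons.mp ha with h | h
      · exact h ▸ hj
      · exact hm a h
    · intro m hm
      exact Sym.cons_erase _
    · intro m hm
      exact Sym.erase_cons_head m j _
    · intro m hm
      have h2 := (Finset.mem_filter.mp hm).2
      conv_lhs => rw [← Sym.cons_erase h2]
      rw [Sym.coe_cons, Multiset.map_cons, Multiset.prod_cons]
  rw [teN, hsplit, Finset.sum_union hdisj, hnotin, hin, ← teN]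
  ring

lemma seg_mem_self (n : ℕ) (j : Fin n) : j ∈ seg n ((j : ℕ) + 1) n := by
  rw [mem_seg_iff]
  exact ⟨le_rfl, j.isLt⟩

lemma seg_erase (n : ℕ) (j : Fin n) :
    (seg n ((j : ℕ) + 1) n).erase j = seg n ((j : ℕ) + 2) n := by
  ext i
  rw [Finset.mem_erase, mem_seg_iff, mem_seg_iff]
  constructor
  · rintro ⟨h1, h2, h3⟩
    have : (i : ℕ) ≠ (j : ℕ) := fun e => h1 (Fin.ext e)
    omega
  · rintro ⟨h1, h2⟩
    exact ⟨fun e => by omega, by omega, h2⟩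

lemma seg_top_empty (n : ℕ) (a : ℕ) (ha : n < a) : seg n a n = ∅ := by
  ext i
  rw [mem_seg_iff]
  have := i.isLt
  simp only [Finset.notMem_empty, iff_false]
  omega

theorem stmt14 (n : ℕ) (hn : 0 < n) (h h' : Fin n → ℕ)
    (hh1 : ∀ i : Fin n, (i : ℕ) + 1 ≤ h i ∧ h i ≤ n)
    (hh2 : ∀ i j : Fin n, i ≤ j → h i ≤ h j)
    (hh1' : ∀ i : Fin n, (i : ℕ) + 1 ≤ h' i ∧ h' i ≤ n)
    (hh2' : ∀ i j : Fin n, i ≤ j → h' i ≤ h' j)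
    (β β' : Fin n → ℕ)
    (hβ : ∀ i : Fin n,
      β i = (i : ℕ) + 1 - (Finset.univ.filter fun k : Fin n => h k < (i : ℕ) + 1).card)
    (hβ' : ∀ i : Fin n,
      β' i = (i : ℕ) + 1 - (Finset.univ.filter fun k : Fin n => h' k < (i : ℕ) + 1).card)
    (hge : ∀ i : Fin n, β' i ≤ β i) :
    Ideal.span (Set.range fun j : Fin n => te n (β j) (seg n ((j : ℕ) + 1) n)) ≤
      Ideal.span (Set.range fun j : Fin n => te n (β' j) (seg n ((j : ℕ) + 1) n)) := by
  classical
  set J' := Ideal.span (Set.range fun j : Fin n => te n (β' j) (seg n ((j : ℕ) + 1) n)) with hJ'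
  -- step lemma for β'
  have hstep : ∀ j j1 : Fin n, (j1 : ℕ) = (j : ℕ) + 1 → β' j1 ≤ β' j + 1 := by
    intro j j1 hj1
    rw [hβ', hβ', hj1]
    have hmono : ((Finset.univ.filter fun k : Fin n => h' k < (j : ℕ) + 1).card ≤
        (Finset.univ.filter fun k : Fin n => h' k < (j : ℕ) + 1 + 1).card) := by
      apply Finset.card_le_card
      intro k hk
      simp only [Finset.mem_filter] at hk ⊢
      exact ⟨hk.1, by omega⟩
    have hcard : (Finset.univ.filter fun k : Fin n => h' k < (j : ℕ) + 1).card ≤ (j : ℕ) := by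
      calc (Finset.univ.filter fun k : Fin n => h' k < (j : ℕ) + 1).card
          ≤ (Finset.Iio j).card := by
            apply Finset.card_le_card
            intro k hk
            simp only [Finset.mem_filter] at hk
            have := (hh1' k).1
            rw [Finset.mem_Iio]
            exact Fin.lt_def.mpr (by omega)
        _ = (j : ℕ) := Fin.card_Iio j
    omega
  -- the key membership lemma
  have key : ∀ m : ℕ, ∀ j : Fin n, n - (j : ℕ) ≤ m → ∀ d : ℕ, β' j ≤ d →
      teN n d (seg n ((j : ℕ) + 1) n) ∈ J' := by
    intro m
    induction m with
    | zero => intro j hj; have := j.isLt; omega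
    | succ m ih =>
      intro j hj d hd
      induction d, hd using Nat.le_induction with
      | base =>
        rw [← te_natCast]
        exact Ideal.subset_span ⟨j, rfl⟩
      | succ d hd ihd =>
        rw [teN_rec n d _ j (seg_mem_self n j), seg_erase]
        apply add_mem _ (Ideal.mul_mem_left _ _ ihd)
        by_cases hjn : (j : ℕ) + 1 < n
        · set j1 : Fin n := ⟨(j : ℕ) + 1, hjn⟩ with hj1
          have : (j : ℕ) + 2 = (j1 : ℕ) + 1 := rfl
          rw [this]
          exact ih j1 (by simp [hj1]; omega) (d + 1)
            (le_trans (hstep j j1 rfl) (by omega))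
        · rw [seg_top_empty n _ (by have := j.isLt; omega), teN_empty]
          exact Ideal.zero_mem _
  rw [Ideal.span_le]
  rintro x ⟨j, rfl⟩
  simp only [SetLike.mem_coe]
  rw [te_natCast]
  exact key n j (by omega) (β j) (hge j)
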